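/- Let w ∈ ℝ² be a nonzero vector of irrational slope (w is not a real scalar multiple of any nonzero integer vector) and let v ∈ Z. Then there exists a unique vector u ∈ Z satisfying |w×u| < (1/2)|w×v|, |u×v| = 1, and w·u > 0. Moreover, if b > 0, |w| > b|v| and |w×v| ≤ ε ≤ 1/(2√2), then (1 − ε/b)·|w|/|w×v| ≤ |u| ≤ (1 + ε/b)·|w|/|w×v|. -/

import Mathlib

/-! With `c = w × v`, which is nonzero because `w` has irrational slope, the integer vectors `u`
with `u × v = 1` form a coset `u₀ + ℤ v` along which `w × u` runs through `w × u₀ + ℤ c`.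
Rounding gives one term of absolute value `< |c|/2`, strictly because irrationality forbids
`w × u` from being a half-integer multiple of `c`, and two such terms differ by less than `|c|`,
hence coincide. The solutions of `u × v = -1` are the negatives, and `w · u ≠ 0` fixes the sign.
For the length, `(w × v) u = (u × v) w + (w × u) v` and `|u × v| = 1` give
`| |c| |u| - |w| | ≤ |w × u| |v| ≤ (ε/b) |w|`. -/

open Pointwise

noncomputable section

/-- Cross product of two vectors in ℝ²: `(a,b) × (c,d) = a d − b c`. -/
def crossP (u v : ℝ × ℝ) : ℝ := u.1 * v.2 - u.2 * v.1

/-- Euclidean inner product on ℝ². -/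
def dotP (u v : ℝ × ℝ) : ℝ := u.1 * v.1 + u.2 * v.2

/-- Euclidean norm on ℝ². -/
def nrm (u : ℝ × ℝ) : ℝ := Real.sqrt (u.1 ^ 2 + u.2 ^ 2)

/-- The set `Z` of primitive integer vectors. -/
def Zset : Set (ℝ × ℝ) := {v | ∃ p q : ℤ, Int.gcd p q = 1 ∧ v = ((p : ℝ), (q : ℝ))}

@[simp] lemma crossP_self (u : ℝ × ℝ) : crossP u u = 0 := by
  simp only [crossP]; ring

@[simp] lemma crossP_zero_left (v : ℝ × ℝ) : crossP 0 v = 0 := by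
  simp [crossP]

@[simp] lemma crossP_zero_right (u : ℝ × ℝ) : crossP u 0 = 0 := by
  simp [crossP]

@[simp] lemma crossP_neg_left (u v : ℝ × ℝ) : crossP (-u) v = -crossP u v := by
  simp only [crossP, Prod.fst_neg, Prod.snd_neg]; ring

@[simp] lemma crossP_neg_right (u v : ℝ × ℝ) : crossP u (-v) = -crossP u v := by
  simp only [crossP, Prod.fst_neg, Prod.snd_neg]; ring

@[simp] lemma crossP_sub_left (u u' v : ℝ × ℝ) :
    crossP (u - u') v = crossP u v - crossP u' v := by
  simp only [crossP, Prod.fst_sub, Prod.snd_sub]; ring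

@[simp] lemma crossP_sub_right (u v v' : ℝ × ℝ) :
    crossP u (v - v') = crossP u v - crossP u v' := by
  simp only [crossP, Prod.fst_sub, Prod.snd_sub]; ring

@[simp] lemma crossP_smul_left (c : ℝ) (u v : ℝ × ℝ) :
    crossP (c • u) v = c * crossP u v := by
  simp only [crossP, Prod.smul_fst, Prod.smul_snd, smul_eq_mul]; ring

@[simp] lemma crossP_smul_right (c : ℝ) (u v : ℝ × ℝ) :
    crossP u (c • v) = c * crossP u v := by
  simp only [crossP, Prod.smul_fst, Prod.smul_snd, smul_eq_mul]; ring

@[simp] lemma dotP_neg_right (u v : ℝ × ℝ) : dotP u (-v) = -dotP u v := by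
  simp only [dotP, Prod.fst_neg, Prod.snd_neg]; ring

lemma crossP_smul_eq_add (w u v : ℝ × ℝ) :
    crossP w v • u = crossP u v • w + crossP w u • v := by
  ext <;> simp only [crossP, Prod.smul_fst, Prod.smul_snd, Prod.fst_add, Prod.snd_add,
    smul_eq_mul] <;> ring

lemma exists_eq_smul_of_crossP_eq_zero {w z : ℝ × ℝ} (hz : z ≠ 0) (h : crossP w z = 0) :
    ∃ c : ℝ, w = c • z := by
  have hz' : z.1 ^ 2 + z.2 ^ 2 ≠ 0 := by
    contrapose! hz
    ext <;> simp only [Prod.fst_zero, Prod.snd_zero] <;> nlinarith [sq_nonneg z.1, sq_nonneg z.2]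
  refine ⟨dotP w z / (z.1 ^ 2 + z.2 ^ 2), Prod.ext ?_ ?_⟩ <;>
    simp only [crossP, dotP, Prod.smul_fst, Prod.smul_snd, smul_eq_mul] at h ⊢ <;>
    field_simp
  · linear_combination z.2 * h
  · linear_combination -z.1 * h

lemma nrm_eq_norm_toLp (z : ℝ × ℝ) : nrm z = ‖WithLp.toLp 2 z‖ := by
  rw [WithLp.prod_norm_eq_of_L2, nrm]
  simp

lemma nrm_nonneg (z : ℝ × ℝ) : 0 ≤ nrm z := Real.sqrt_nonneg _

lemma abs_nrm_sub_abs_crossP_mul_nrm_le {w u v : ℝ × ℝ} (huv : |crossP u v| = 1) :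
    |nrm w - |crossP w v| * nrm u| ≤ |crossP w u| * nrm v := by
  have key : WithLp.toLp 2 (crossP w v • u) - WithLp.toLp 2 (crossP u v • w)
      = WithLp.toLp 2 (crossP w u • v) := by
    rw [crossP_smul_eq_add, WithLp.toLp_add, add_sub_cancel_left]
  have := abs_norm_sub_norm_le
    (WithLp.toLp 2 (crossP w v • u)) (WithLp.toLp 2 (crossP u v • w))
  rw [key] at this
  simp only [WithLp.toLp_smul, norm_smul, Real.norm_eq_abs, huv, one_mul,
    ← nrm_eq_norm_toLp] at this
  rwa [abs_sub_comm]

lemma nrm_bounds_of_abs_crossP_eq_one {w u v : ℝ × ℝ} {b ε : ℝ} (huv : |crossP u v| = 1)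
    (hwu : |crossP w u| < |crossP w v| / 2) (hb : 0 < b) (hbv : b * nrm v < nrm w)
    (hε : |crossP w v| ≤ ε) :
    (1 - ε / b) * nrm w / |crossP w v| ≤ nrm u ∧
      nrm u ≤ (1 + ε / b) * nrm w / |crossP w v| := by
  have hc : 0 < |crossP w v| := by linarith [abs_nonneg (crossP w u)]
  have herr : |crossP w u| * nrm v ≤ ε / b * nrm w :=
    calc |crossP w u| * nrm v ≤ ε * (nrm w / b) :=
          mul_le_mul (by linarith) ((le_div_iff₀ hb).2 (by linarith)) (nrm_nonneg v)
            (by linarith)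
      _ = ε / b * nrm w := by ring
  have key := abs_le.1 ((abs_nrm_sub_abs_crossP_mul_nrm_le huv).trans herr)
  rw [div_le_iff₀ hc, le_div_iff₀ hc]
  constructor <;> linarith [key.1, key.2]

lemma exists_abs_sub_int_mul_lt {a c : ℝ} (hc : c ≠ 0) (h : ∀ k : ℤ, 2 * a ≠ k * c) :
    ∃ t : ℤ, |a - t * c| < |c| / 2 := by
  set t := round (a / c)
  have hne : |a / c - t| ≠ 1 / 2 := by
    intro heq
    rcases (abs_eq (by norm_num)).1 heq with h' | h'
    · apply h (2 * t + 1)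
      field_simp at h'
      push_cast
      linarith
    · apply h (2 * t - 1)
      field_simp at h'
      push_cast
      linarith
  refine ⟨t, ?_⟩
  calc |a - t * c| = |a / c - t| * |c| := by rw [← abs_mul, sub_mul, div_mul_cancel₀ a hc]
    _ < 1 / 2 * |c| := by gcongr; exact (abs_sub_round _).lt_of_ne hne
    _ = |c| / 2 := by ring

def intVec : ℤ × ℤ →+ ℝ × ℝ := (Int.castAddHom ℝ).prodMap (Int.castAddHom ℝ)

lemma intVec_apply (z : ℤ × ℤ) : intVec z = ((z.1 : ℝ), (z.2 : ℝ)) := rfl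

lemma intVec_eq_zero {z : ℤ × ℤ} : intVec z = 0 ↔ z = 0 := by
  simp [intVec_apply, Prod.ext_iff]

lemma intVec_zsmul (k : ℤ) (z : ℤ × ℤ) : intVec (k • z) = (k : ℝ) • intVec z := by
  rw [map_zsmul, Int.cast_smul_eq_zsmul]

lemma crossP_intVec (u v : ℤ × ℤ) :
    crossP (intVec u) (intVec v) = ((u.1 * v.2 - u.2 * v.1 : ℤ) : ℝ) := by
  simp [crossP, intVec_apply]

lemma mem_Zset_iff {x : ℝ × ℝ} :
    x ∈ Zset ↔ ∃ z : ℤ × ℤ, IsCoprime z.1 z.2 ∧ intVec z = x := by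
  simp only [Zset, Set.mem_ofPred_eq, Int.isCoprime_iff_gcd_eq_one, intVec_apply, Prod.exists,
    eq_comm]

lemma isCoprime_of_abs_crossP_eq_one {u v : ℤ × ℤ}
    (h : |crossP (intVec u) (intVec v)| = 1) : IsCoprime u.1 u.2 := by
  rw [crossP_intVec] at h
  have h' : |u.1 * v.2 - u.2 * v.1| = 1 := by exact_mod_cast h
  rcases (abs_eq zero_le_one).1 h' with h' | h'
  · exact ⟨v.2, -v.1, by linear_combination h'⟩
  · exact ⟨-v.2, v.1, by linear_combination -h'⟩

lemma exists_crossP_eq_one {v : ℤ × ℤ} (hv : IsCoprime v.1 v.2) :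
    ∃ u : ℤ × ℤ, crossP (intVec u) (intVec v) = 1 := by
  obtain ⟨a, b, hab⟩ := hv
  refine ⟨(b, -a), ?_⟩
  rw [crossP_intVec]
  exact_mod_cast (by linear_combination hab : b * v.2 - -a * v.1 = 1)

lemma exists_eq_zsmul_of_crossP_eq_zero {d v : ℤ × ℤ} (hv : IsCoprime v.1 v.2)
    (h : crossP (intVec d) (intVec v) = 0) : ∃ k : ℤ, d = k • v := by
  obtain ⟨a, b, hab⟩ := hv
  rw [crossP_intVec] at h
  have h' : d.1 * v.2 - d.2 * v.1 = 0 := by exact_mod_cast h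
  refine ⟨a * d.1 + b * d.2, Prod.ext ?_ ?_⟩ <;>
    simp only [Prod.smul_fst, Prod.smul_snd, smul_eq_mul]
  · linear_combination -d.1 * hab + b * h'
  · linear_combination -d.2 * hab - a * h'

lemma crossP_intVec_ne_zero {w : ℝ × ℝ}
    (hirr : ∀ p q : ℤ, ¬(p = 0 ∧ q = 0) → ∀ c : ℝ,
      w ≠ c • (((p : ℝ), (q : ℝ)) : ℝ × ℝ))
    {z : ℤ × ℤ} (hz : z ≠ 0) : crossP w (intVec z) ≠ 0 := fun h =>
  have ⟨c, hc⟩ := exists_eq_smul_of_crossP_eq_zero (intVec_eq_zero.not.2 hz) h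
  hirr z.1 z.2 (fun ⟨h1, h2⟩ => hz (Prod.ext h1 h2)) c hc

section Lattice

variable {w : ℝ × ℝ} {v : ℤ × ℤ}

lemma eq_of_crossP_eq_of_abs_crossP_lt (hv : IsCoprime v.1 v.2) {u u' : ℤ × ℤ}
    (h : crossP (intVec u) (intVec v) = crossP (intVec u') (intVec v))
    (hu : |crossP w (intVec u)| < |crossP w (intVec v)| / 2)
    (hu' : |crossP w (intVec u')| < |crossP w (intVec v)| / 2) : u = u' := by
  obtain ⟨k, hk⟩ := exists_eq_zsmul_of_crossP_eq_zero (d := u - u') hv (by simp [h])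
  have hwk : crossP w (intVec u) - crossP w (intVec u') = k * crossP w (intVec v) := by
    rw [← crossP_sub_right, ← map_sub, hk, intVec_zsmul, crossP_smul_right]
  have hk1 : |(k : ℝ)| * |crossP w (intVec v)| < 1 * |crossP w (intVec v)| := by
    rw [← abs_mul, ← hwk]
    linarith [abs_sub (crossP w (intVec u)) (crossP w (intVec u'))]
  have hk0 : k = 0 := by
    rw [← Int.abs_lt_one_iff]
    exact_mod_cast lt_of_mul_lt_mul_right hk1 (abs_nonneg _)
  rwa [hk0, zero_smul, sub_eq_zero] at hk

lemma eq_or_eq_neg_of_abs_crossP_eq_one (hv : IsCoprime v.1 v.2) {u u' : ℤ × ℤ}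
    (hu : |crossP w (intVec u)| < |crossP w (intVec v)| / 2 ∧
      |crossP (intVec u) (intVec v)| = 1)
    (hu' : |crossP w (intVec u')| < |crossP w (intVec v)| / 2 ∧
      |crossP (intVec u') (intVec v)| = 1) : u' = u ∨ u' = -u := by
  rcases abs_eq_abs.1 (hu'.2.trans hu.2.symm) with h | h
  · exact .inl (eq_of_crossP_eq_of_abs_crossP_lt hv h hu'.1 hu.1)
  · refine .inr (eq_of_crossP_eq_of_abs_crossP_lt hv ?_ hu'.1 ?_)
    · simpa using h
    · simpa using hu.1

lemma exists_crossP_eq_one_abs_crossP_lt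
    (hw : ∀ z : ℤ × ℤ, z ≠ 0 → crossP w (intVec z) ≠ 0) (hv : IsCoprime v.1 v.2) :
    ∃ u : ℤ × ℤ, crossP (intVec u) (intVec v) = 1 ∧
      |crossP w (intVec u)| < |crossP w (intVec v)| / 2 := by
  obtain ⟨u₀, hu₀⟩ := exists_crossP_eq_one hv
  have hv0 : v ≠ 0 := by rintro rfl; simp at hu₀
  have hhalf : ∀ k : ℤ, 2 * crossP w (intVec u₀) ≠ k * crossP w (intVec v) := by
    intro k hk
    refine hw ((2 : ℤ) • u₀ - k • v) (fun h0 => ?_) ?_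
    · have := congrArg (fun z => crossP (intVec z) (intVec v)) h0
      simp only [map_sub, map_zero, intVec_zsmul, crossP_sub_left, crossP_smul_left, crossP_self,
        crossP_zero_left, hu₀] at this
      norm_num at this
    · simp only [map_sub, intVec_zsmul, crossP_sub_right, crossP_smul_right]
      push_cast
      linear_combination hk
  obtain ⟨t, ht⟩ := exists_abs_sub_int_mul_lt (hw v hv0) hhalf
  refine ⟨u₀ - t • v, ?_, ?_⟩ <;>
    simp only [map_sub, intVec_zsmul, crossP_sub_left, crossP_sub_right, crossP_smul_left,
      crossP_smul_right, crossP_self, hu₀, ht, mul_zero, sub_zero]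

lemma dotP_intVec_ne_zero (hw : ∀ z : ℤ × ℤ, z ≠ 0 → crossP w (intVec z) ≠ 0)
    {u : ℤ × ℤ} (hu : u ≠ 0) : dotP w (intVec u) ≠ 0 := by
  have hrot : dotP w (intVec u) = crossP w (intVec (-u.2, u.1)) := by
    simp only [dotP, crossP, intVec_apply]; push_cast; ring
  rw [hrot]
  exact hw _ (by simpa [Prod.ext_iff, and_comm] using hu)

theorem existsUnique_abs_crossP_lt_abs_crossP_eq_one_dotP_pos
    (hw : ∀ z : ℤ × ℤ, z ≠ 0 → crossP w (intVec z) ≠ 0) (hv : IsCoprime v.1 v.2) :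
    ∃! u : ℤ × ℤ, |crossP w (intVec u)| < |crossP w (intVec v)| / 2 ∧
      |crossP (intVec u) (intVec v)| = 1 ∧ 0 < dotP w (intVec u) := by
  obtain ⟨u₁, hu₁v, hwu₁⟩ := exists_crossP_eq_one_abs_crossP_lt hw hv
  have hsol : ∀ u, u = u₁ ∨ u = -u₁ →
      |crossP w (intVec u)| < |crossP w (intVec v)| / 2 ∧
        |crossP (intVec u) (intVec v)| = 1 := by
    rintro _ (rfl | rfl) <;> simp [hu₁v, hwu₁]
  obtain ⟨u, hu, hdot⟩ : ∃ u, (u = u₁ ∨ u = -u₁) ∧ 0 < dotP w (intVec u) := by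
    rcases (dotP_intVec_ne_zero hw (u := u₁) (by rintro rfl; simp at hu₁v)).lt_or_gt with h | h
    · exact ⟨-u₁, .inr rfl, by simpa using h⟩
    · exact ⟨u₁, .inl rfl, h⟩
  refine ⟨u, ⟨(hsol u hu).1, (hsol u hu).2, hdot⟩, fun u' ⟨hwu', hu'v, hdot'⟩ => ?_⟩
  rcases eq_or_eq_neg_of_abs_crossP_eq_one hv (hsol u hu) ⟨hwu', hu'v⟩ with rfl | rfl
  · rfl
  · simp only [map_neg, dotP_neg_right] at hdot'
    linarith

end Lattice

theorem slowly_divergent_u_length_general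
    (w : ℝ × ℝ)
    (hirr : ∀ p q : ℤ, ¬(p = 0 ∧ q = 0) → ∀ c : ℝ,
      w ≠ c • (((p : ℝ), (q : ℝ)) : ℝ × ℝ))
    (v : ℝ × ℝ) (hv : v ∈ Zset) :
    ∃ u : ℝ × ℝ,
      (u ∈ Zset ∧ |crossP w u| < |crossP w v| / 2 ∧ |crossP u v| = 1 ∧
        0 < dotP w u) ∧
      (∀ u' : ℝ × ℝ,
        (u' ∈ Zset ∧ |crossP w u'| < |crossP w v| / 2 ∧ |crossP u' v| = 1 ∧
          0 < dotP w u') → u' = u) ∧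
      ∀ b ε : ℝ, 0 < b → b * nrm v < nrm w → |crossP w v| ≤ ε →
        ε ≤ 1 / (2 * Real.sqrt 2) →
        (1 - ε / b) * nrm w / |crossP w v| ≤ nrm u ∧
        nrm u ≤ (1 + ε / b) * nrm w / |crossP w v| := by
  obtain ⟨v, hprim, rfl⟩ := mem_Zset_iff.1 hv
  obtain ⟨u, ⟨hwu, huv, hdot⟩, huniq⟩ := existsUnique_abs_crossP_lt_abs_crossP_eq_one_dotP_pos
    (fun _ => crossP_intVec_ne_zero hirr) hprim
  have hu : intVec u ∈ Zset := mem_Zset_iff.2 ⟨u, isCoprime_of_abs_crossP_eq_one huv, rfl⟩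
  refine ⟨intVec u, ⟨hu, hwu, huv, hdot⟩, ?_,
    fun b ε hb hbv hε _ => nrm_bounds_of_abs_crossP_eq_one huv hwu hb hbv hε⟩
  rintro _ ⟨hu', hwu', hu'v, hdot'⟩
  obtain ⟨u', -, rfl⟩ := mem_Zset_iff.1 hu'
  rw [huniq u' ⟨hwu', hu'v, hdot'⟩]

/-- Lemma "|u|".  If `w` has irrational slope and `v ∈ Z`, there is a
unique `u ∈ Z` with `|w×u| < |w×v|/2`, `|u×v| = 1` and `w·u > 0`; and if `b > 0`,
`|w| > b|v|` and `|w×v| ≤ ε ≤ 1/(2√2)`, then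
`(1−ε/b)|w|/|w×v| ≤ |u| ≤ (1+ε/b)|w|/|w×v|`. -/
theorem slowly_divergent_u_length
    (w : ℝ × ℝ) (hw : w ≠ 0)
    (hirr : ∀ p q : ℤ, ¬(p = 0 ∧ q = 0) → ∀ c : ℝ,
      w ≠ c • (((p : ℝ), (q : ℝ)) : ℝ × ℝ))
    (v : ℝ × ℝ) (hv : v ∈ Zset) :
    ∃ u : ℝ × ℝ,
      (u ∈ Zset ∧ |crossP w u| < |crossP w v| / 2 ∧ |crossP u v| = 1 ∧
        0 < dotP w u) ∧
      (∀ u' : ℝ × ℝ,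
        (u' ∈ Zset ∧ |crossP w u'| < |crossP w v| / 2 ∧ |crossP u' v| = 1 ∧
          0 < dotP w u') → u' = u) ∧
      ∀ b ε : ℝ, 0 < b → b * nrm v < nrm w → |crossP w v| ≤ ε →
        ε ≤ 1 / (2 * Real.sqrt 2) →
        (1 - ε / b) * nrm w / |crossP w v| ≤ nrm u ∧
        nrm u ≤ (1 + ε / b) * nrm w / |crossP w v| :=
  slowly_divergent_u_length_general w hirr v hv
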